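/- Let (a_n) and (b_n) be sequences of complex numbers (or elements of a commutative ring over which the relevant matrices are defined). Then b_n = Σ_{k=0}^{n} G_{a,b}(n,k;r)·a_k holds for all n ≥ 0 if and only if a_n = Σ_{k=0}^{n} (−1)^{n−k}·G_{b,a}(n,k;r)·b_k holds for all n ≥ 0. -/

import Mathlib

/-!
With `P n = ∏_{i<n} (x + a(i+r))` and `Q k = ∏_{i<k} (x - b(i+r))`, the recurrence says
`P n = ∑ G_{a,b}(n,k;r) Q k`, and substituting `-x` in the same expansion for `(b, a)` gives
`Q n = ∑ (-1)^(n-k) G_{b,a}(n,k;r) P k`: the two triangular arrays are mutually inverse.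
We check this orthogonality directly by induction on `n`, using that the row recurrence of
`G_{a,b}` and the column recurrence of `G_{b,a}` cancel up to the factor `a (n - j)`.
-/

open Finset

/-- The generalized r-Lah numbers `G_{a,b}(n,k;r)`. -/
def genLah {R : Type*} [CommRing R] (a b : R) (r : ℕ) : ℕ → ℕ → R
  | 0, 0 => 1
  | 0, _ + 1 => 0
  | n + 1, 0 => (a * ((n : R) + (r : R)) + b * (r : R)) * genLah a b r n 0
  | n + 1, k + 1 => genLah a b r n k +
      (a * (n : R) + b * ((k : R) + 1) + (a + b) * (r : R)) * genLah a b r n (k + 1)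

section Inversion

variable {R : Type*} [Semiring R]

theorem eq_sum_range_of_leftInverse {M N : ℕ → ℕ → R} (hN : ∀ k j, k < j → N k j = 0)
    (hMN : ∀ n j, ∑ k ∈ range (n + 1), M n k * N k j = if n = j then 1 else 0)
    {A B : ℕ → R} (hB : ∀ n, B n = ∑ k ∈ range (n + 1), N n k * A k) (n : ℕ) :
    A n = ∑ k ∈ range (n + 1), M n k * B k := by
  have extend : ∀ k ∈ range (n + 1),
      ∑ j ∈ range (k + 1), N k j * A j = ∑ j ∈ range (n + 1), N k j * A j := by
    intro k hk
    refine sum_subset (range_subset_range.2 (by simpa using hk)) fun j _ hj => ?_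
    rw [hN k j (by simpa using hj), zero_mul]
  calc A n = ∑ j ∈ range (n + 1), (if n = j then 1 else 0) * A j := by simp
    _ = ∑ k ∈ range (n + 1), M n k * ∑ j ∈ range (n + 1), N k j * A j := by
      simp only [← hMN, sum_mul, mul_sum, mul_assoc]
      exact sum_comm
    _ = ∑ k ∈ range (n + 1), M n k * B k := by
      refine sum_congr rfl fun k hk => ?_
      rw [hB, extend k hk]

end Inversion

theorem neg_one_pow_sub_eq_mul {R : Type*} [Ring R] {j k : ℕ} (h : j ≤ k) :
    (-1 : R) ^ (k - j) = (-1) ^ k * (-1) ^ j := by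
  rw [← pow_sub_mul_pow (-1 : R) h, mul_assoc, ← pow_add, Even.neg_one_pow ⟨j, rfl⟩, mul_one]

section GenLah

variable {R : Type*} [CommRing R] (a b : R) (r : ℕ)

theorem genLah_eq_zero_of_lt {n k : ℕ} (h : n < k) : genLah a b r n k = 0 := by
  induction n generalizing k with
  | zero => obtain ⟨k, rfl⟩ := Nat.exists_eq_add_one_of_ne_zero (by omega : k ≠ 0); rfl
  | succ n ih =>
    obtain ⟨k, rfl⟩ := Nat.exists_eq_add_one_of_ne_zero (by omega : k ≠ 0)
    rw [genLah, ih (by omega), ih (by omega), mul_zero, add_zero]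

theorem genLah_succ (n k : ℕ) :
    genLah a b r (n + 1) k = (if k = 0 then 0 else genLah a b r n (k - 1)) +
      (a * n + b * k + (a + b) * r) * genLah a b r n k := by
  cases k with
  | zero => simp only [genLah, if_pos]; push_cast; ring
  | succ k => simp only [genLah, if_neg (Nat.succ_ne_zero k), Nat.add_sub_cancel]; push_cast; ring

theorem sum_neg_one_pow_mul_genLah_mul_genLah_swap_succ (n j : ℕ) :
    ∑ k ∈ range (n + 2), (-1) ^ k * genLah a b r (n + 1) k * genLah b a r k j =
      a * (n - j) * ∑ k ∈ range (n + 1), (-1) ^ k * genLah a b r n k * genLah b a r k j -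
        if j = 0 then 0 else
          ∑ k ∈ range (n + 1), (-1) ^ k * genLah a b r n k * genLah b a r k (j - 1) := by
  have shifted : ∑ k ∈ range (n + 2),
      (-1) ^ k * (if k = 0 then 0 else genLah a b r n (k - 1)) * genLah b a r k j =
        ∑ k ∈ range (n + 1), -((-1) ^ k * genLah a b r n k * genLah b a r (k + 1) j) := by
    simp [sum_range_succ', pow_succ]
  have truncated : ∑ k ∈ range (n + 2),
      (-1) ^ k * ((a * n + b * k + (a + b) * r) * genLah a b r n k) * genLah b a r k j =
        ∑ k ∈ range (n + 1),
          (a * n + b * k + (a + b) * r) * ((-1) ^ k * genLah a b r n k * genLah b a r k j) := by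
    rw [sum_range_succ, genLah_eq_zero_of_lt a b r (Nat.lt_succ_self n)]
    simp only [mul_zero, zero_mul, add_zero]
    exact sum_congr rfl fun k _ => by ring
  have expanded : ∑ k ∈ range (n + 2), (-1) ^ k * genLah a b r (n + 1) k * genLah b a r k j =
      ∑ k ∈ range (n + 2),
        ((-1) ^ k * (if k = 0 then 0 else genLah a b r n (k - 1)) * genLah b a r k j +
          (-1) ^ k * ((a * n + b * k + (a + b) * r) * genLah a b r n k) * genLah b a r k j) :=
    sum_congr rfl fun k _ => by rw [genLah_succ]; ring
  rw [expanded, sum_add_distrib, shifted, truncated, ← sum_add_distrib, mul_sum]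
  cases j with
  | zero =>
    rw [if_pos rfl, sub_zero]
    refine sum_congr rfl fun k _ => ?_
    rw [genLah]
    push_cast
    ring
  | succ j =>
    rw [if_neg (Nat.succ_ne_zero j), Nat.add_sub_cancel, ← sum_sub_distrib]
    refine sum_congr rfl fun k _ => ?_
    rw [genLah]
    push_cast
    ring

theorem sum_neg_one_pow_mul_genLah_mul_genLah_swap (n j : ℕ) :
    ∑ k ∈ range (n + 1), (-1) ^ k * genLah a b r n k * genLah b a r k j =
      if n = j then (-1) ^ n else 0 := by
  induction n generalizing j with
  | zero => cases j <;> simp [genLah]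
  | succ n ih =>
    rw [sum_neg_one_pow_mul_genLah_mul_genLah_swap_succ, ih]
    rcases j with _ | j
    · rcases n with _ | n <;> simp
    · rw [if_neg (Nat.succ_ne_zero j), Nat.add_sub_cancel, ih]
      split_ifs <;> subst_vars <;> simp_all [pow_succ]

theorem sum_signed_genLah_swap_mul_genLah (n j : ℕ) :
    ∑ k ∈ range (n + 1), (-1) ^ (n - k) * genLah b a r n k * genLah a b r k j =
      if n = j then 1 else 0 := by
  calc _ = (-1) ^ n * ∑ k ∈ range (n + 1), (-1) ^ k * genLah b a r n k * genLah a b r k j := by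
        rw [mul_sum]
        refine sum_congr rfl fun k hk => ?_
        rw [neg_one_pow_sub_eq_mul (Nat.lt_succ_iff.1 (mem_range.1 hk))]
        ring
    _ = if n = j then 1 else 0 := by
        rw [sum_neg_one_pow_mul_genLah_mul_genLah_swap, mul_ite, mul_zero, ← pow_add,
          Even.neg_one_pow ⟨n, rfl⟩]

theorem sum_genLah_mul_signed_genLah_swap (n j : ℕ) :
    ∑ k ∈ range (n + 1), genLah a b r n k * ((-1) ^ (k - j) * genLah b a r k j) =
      if n = j then 1 else 0 := by
  calc _ = (-1) ^ j * ∑ k ∈ range (n + 1), (-1) ^ k * genLah a b r n k * genLah b a r k j := by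
        rw [mul_sum]
        refine sum_congr rfl fun k _ => ?_
        rcases le_or_gt j k with hjk | hkj
        · rw [neg_one_pow_sub_eq_mul hjk]
          ring
        · simp [genLah_eq_zero_of_lt b a r hkj]
    _ = if n = j then 1 else 0 := by
        rw [sum_neg_one_pow_mul_genLah_mul_genLah_swap]
        split_ifs with hnj
        · rw [hnj, ← pow_add, Even.neg_one_pow ⟨j, rfl⟩]
        · rw [mul_zero]

end GenLah

theorem genLah_inversion (a b : ℂ) (r : ℕ) (A B : ℕ → ℂ) :
    (∀ n, B n = ∑ k ∈ range (n + 1), genLah a b r n k * A k) ↔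
      (∀ n, A n = ∑ k ∈ range (n + 1), (-1) ^ (n - k) * genLah b a r n k * B k) :=
  ⟨fun h => eq_sum_range_of_leftInverse (fun _ _ => genLah_eq_zero_of_lt a b r)
      (sum_signed_genLah_swap_mul_genLah a b r) h,
    fun h => eq_sum_range_of_leftInverse
      (fun _ _ hkj => by rw [genLah_eq_zero_of_lt b a r hkj, mul_zero])
      (sum_genLah_mul_signed_genLah_swap a b r) h⟩
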